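/- arXiv:2212.14171 — 2 statements merged into one kernel-verified Lean document; each statement's English description precedes it below -/
import Mathlib

section
/- With notation as before, if z ⊆* v ⊆* t (almost containment of subsets of ℕ), then μ_{t}(pinf(z)) ≤ μ_{v}(pinf(z)), where pinf(z) = { x : x ∩ I_π(n) ⊆ z ∩ I_π(n) for infinitely many n } and μ_t is the partition product measure associated to t. -/
open Set MeasureTheory Filter
open scoped ENNReal

noncomputable instance : MeasurableSpace (Set ℕ) := ⊤

/-- `a ⊆* b` : almost containment of subsets of ℕ. -/
def ASub (a b : Set ℕ) : Prop := (a \ b).Finite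

/-- The `n`-th interval `I_π(n) = [π n, π (n+1))` of the partition function `π`. -/
def Iblk (π : ℕ → ℕ) (n : ℕ) : Set ℕ := Set.Ico (π n) (π (n + 1))

/-- The factor probability `ν_{I_π(n), a}` : the uniform probability measure on
subsets of `a ∩ I_π(n)`, given by counting. -/
noncomputable def nuFun (a : Set ℕ) (π : ℕ → ℕ) (n : ℕ) (U : Set (Set ℕ)) : ℝ≥0∞ :=
  ({s : Set ℕ | s ⊆ a ∩ Iblk π n ∧ s ∈ U}.ncard : ℝ≥0∞) / 2 ^ (a ∩ Iblk π n).ncard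

/-- `pinf(z) = {x : x(n) ∩ I_π(n) ⊆ z ∩ I_π(n) for infinitely many n}`. -/
def pinfSet (π : ℕ → ℕ) (z : Set ℕ) : Set (ℕ → Set ℕ) :=
  {x | ∃ᶠ n in atTop, x n ∩ Iblk π n ⊆ z ∩ Iblk π n}

/-!
Beyond some block `N` we have `z ∩ I n ⊆ v ∩ I n ⊆ t ∩ I n`, so the probability
`1 - 2 ^ (|z ∩ I n| - |a ∩ I n|)` that a random subset of `a ∩ I n` is not contained in `z`
is at least as large for `a = t` as for `a = v`. By the product formula the same comparison holds
for every cylinder "not contained in `z` on each block of `[m, M)`" with `m ≥ N`, hence, by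
continuity of measure, for the complement of `pinf z`: the increasing union over `m` of the
tail events "not contained in `z` on every block `≥ m`".
-/

theorem setOf_eventually_mem_eq_iUnion_iInter {α : Type*} {A : ℕ → Set α} :
    {x : ℕ → α | ∀ᶠ n in atTop, x n ∈ A n}
      = ⋃ m, ⋂ M, {x | ∀ k < M, m ≤ k → x k ∈ A k} := by
  ext x
  simp only [eventually_atTop, mem_ofPred_eq, mem_iUnion, mem_iInter]
  exact exists_congr fun m ↦ ⟨fun h M k _ hk ↦ h k hk, fun h k hk ↦ h (k + 1) k k.lt_succ_self hk⟩

section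

variable {α : Type*} [MeasurableSpace α] {μ ν : Measure α}

theorem measure_iUnion_le_of_eventually_le {s : ℕ → Set α} (hs : Monotone s)
    (h : ∀ᶠ n in atTop, μ (s n) ≤ ν (s n)) : μ (⋃ n, s n) ≤ ν (⋃ n, s n) :=
  le_of_tendsto_of_tendsto (tendsto_measure_iUnion_atTop hs) (tendsto_measure_iUnion_atTop hs) h

theorem measure_iInter_le_of_le [IsFiniteMeasure μ] [IsFiniteMeasure ν] {s : ℕ → Set α}
    (hs : Antitone s) (hm : ∀ n, MeasurableSet (s n)) (h : ∀ n, μ (s n) ≤ ν (s n)) :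
    μ (⋂ n, s n) ≤ ν (⋂ n, s n) :=
  le_of_tendsto_of_tendsto'
    (tendsto_measure_iInter_atTop (fun n ↦ (hm n).nullMeasurableSet) hs ⟨0, measure_ne_top _ _⟩)
    (tendsto_measure_iInter_atTop (fun n ↦ (hm n).nullMeasurableSet) hs ⟨0, measure_ne_top _ _⟩)
    h

theorem prob_le_of_prob_compl_le [IsProbabilityMeasure μ] [IsProbabilityMeasure ν] {s : Set α}
    (hs : MeasurableSet s) (h : ν sᶜ ≤ μ sᶜ) : μ s ≤ ν s := by
  rw [prob_compl_eq_one_sub hs, prob_compl_eq_one_sub hs] at h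
  exact (ENNReal.sub_le_sub_iff_left prob_le_one ENNReal.one_ne_top).1 h

end

section Pi

variable {α : Type*} [MeasurableSpace α] {μ ν : Measure (ℕ → α)} {A : ℕ → Set α}

theorem measurableSet_setOf_frequently_mem (hA : ∀ n, MeasurableSet (A n)) :
    MeasurableSet {x : ℕ → α | ∃ᶠ n in atTop, x n ∈ A n} := by
  have : {x : ℕ → α | ∃ᶠ n in atTop, x n ∈ A n} = limsup (fun n ↦ (· n) ⁻¹' A n) atTop := by
    ext x; simp [mem_limsup_iff_frequently_mem]
  exact this ▸ MeasurableSet.measurableSet_limsup fun n ↦ measurable_pi_apply n (hA n)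

theorem measurableSet_setOf_forall_lt_mem (hA : ∀ n, MeasurableSet (A n)) (m M : ℕ) :
    MeasurableSet {x : ℕ → α | ∀ k < M, m ≤ k → x k ∈ A k} := by
  measurability

theorem measure_setOf_eventually_mem_le [IsFiniteMeasure μ] [IsFiniteMeasure ν]
    (hA : ∀ n, MeasurableSet (A n))
    (h : ∀ᶠ m in atTop, ∀ M,
      μ {x | ∀ k < M, m ≤ k → x k ∈ A k} ≤ ν {x | ∀ k < M, m ≤ k → x k ∈ A k}) :
    μ {x | ∀ᶠ n in atTop, x n ∈ A n} ≤ ν {x | ∀ᶠ n in atTop, x n ∈ A n} := by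
  rw [setOf_eventually_mem_eq_iUnion_iInter]
  refine measure_iUnion_le_of_eventually_le ?_ ?_
  · exact fun m m' hm ↦ iInter_mono fun M x hx k hk hmk ↦ hx k hk (hm.trans hmk)
  · filter_upwards [h] with m hm
    exact measure_iInter_le_of_le (fun M M' hM x hx k hk ↦ hx k (hk.trans_le hM))
      (measurableSet_setOf_forall_lt_mem hA m) hm

end Pi

def subsetOnBlock (π : ℕ → ℕ) (z : Set ℕ) (n : ℕ) : Set (Set ℕ) :=
  {s | s ∩ Iblk π n ⊆ z ∩ Iblk π n}

theorem ASub.eventually_inter_Iblk_subset {π : ℕ → ℕ} (hπ : StrictMono π) {a b : Set ℕ}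
    (h : ASub a b) : ∀ᶠ n in atTop, a ∩ Iblk π n ⊆ b ∩ Iblk π n := by
  obtain ⟨N, hN⟩ := h.bddAbove
  filter_upwards [eventually_gt_atTop N] with n hn
  rintro i ⟨hia, hiI⟩
  refine ⟨by_contra fun hib ↦ ?_, hiI⟩
  exact (hn.trans_le (hπ.le_apply.trans hiI.1)).not_ge (hN ⟨hia, hib⟩)

theorem nuFun_add_nuFun_compl (a : Set ℕ) (π : ℕ → ℕ) (n : ℕ) (U : Set (Set ℕ)) :
    nuFun a π n U + nuFun a π n Uᶜ = 1 := by
  have hF : (a ∩ Iblk π n).Finite := (finite_Ico _ _).inter_of_right a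
  rw [nuFun, nuFun, ← ENNReal.add_div, ← Nat.cast_add,
    show {s : Set ℕ | s ⊆ a ∩ Iblk π n ∧ s ∈ U} = 𝒫 (a ∩ Iblk π n) ∩ U from rfl,
    show {s : Set ℕ | s ⊆ a ∩ Iblk π n ∧ s ∈ Uᶜ} = 𝒫 (a ∩ Iblk π n) \ U from rfl,
    ncard_inter_add_ncard_sdiff_eq_ncard _ _ hF.powerset, ncard_powerset _ hF]
  push_cast
  exact ENNReal.div_self (by positivity) (by simp)

theorem nuFun_compl (a : Set ℕ) (π : ℕ → ℕ) (n : ℕ) (U : Set (Set ℕ)) :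
    nuFun a π n Uᶜ = 1 - nuFun a π n U :=
  ENNReal.eq_sub_of_add_eq' ENNReal.one_ne_top <|
    (add_comm _ _).trans (nuFun_add_nuFun_compl a π n U)

theorem nuFun_univ (a : Set ℕ) (π : ℕ → ℕ) (n : ℕ) : nuFun a π n univ = 1 := by
  simpa [nuFun] using nuFun_add_nuFun_compl a π n univ

theorem nuFun_subsetOnBlock {a z : Set ℕ} {π : ℕ → ℕ} {n : ℕ}
    (hza : z ∩ Iblk π n ⊆ a ∩ Iblk π n) :
    nuFun a π n (subsetOnBlock π z n) = 2 ^ (z ∩ Iblk π n).ncard / 2 ^ (a ∩ Iblk π n).ncard := by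
  have : {s : Set ℕ | s ⊆ a ∩ Iblk π n ∧ s ∈ subsetOnBlock π z n} = 𝒫 (z ∩ Iblk π n) := by
    ext s
    simp only [subsetOnBlock, mem_ofPred_eq, mem_powerset_iff]
    exact ⟨fun ⟨hsa, hsz⟩ ↦ inter_eq_left.2 (hsa.trans inter_subset_right) ▸ hsz,
      fun hsz ↦ ⟨hsz.trans hza, inter_subset_left.trans hsz⟩⟩
  rw [nuFun, this, ncard_powerset (z ∩ Iblk π n) ((finite_Ico _ _).inter_of_right z)]
  push_cast
  rfl

theorem nuFun_compl_subsetOnBlock_mono {a b z : Set ℕ} {π : ℕ → ℕ} {n : ℕ}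
    (hza : z ∩ Iblk π n ⊆ a ∩ Iblk π n) (hab : a ∩ Iblk π n ⊆ b ∩ Iblk π n) :
    nuFun a π n (subsetOnBlock π z n)ᶜ ≤ nuFun b π n (subsetOnBlock π z n)ᶜ := by
  rw [nuFun_compl, nuFun_compl, nuFun_subsetOnBlock hza, nuFun_subsetOnBlock (hza.trans hab)]
  gcongr
  · exact one_le_two
  · exact (finite_Ico _ _).inter_of_right b

theorem measurableSet_pinfSet (π : ℕ → ℕ) (z : Set ℕ) : MeasurableSet (pinfSet π z) :=
  measurableSet_setOf_frequently_mem (A := subsetOnBlock π z) fun _ ↦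
    MeasurableSpace.measurableSet_top

theorem compl_pinfSet (π : ℕ → ℕ) (z : Set ℕ) :
    (pinfSet π z)ᶜ = {x | ∀ᶠ n in atTop, x n ∈ (subsetOnBlock π z n)ᶜ} := by
  ext x
  simp [pinfSet, subsetOnBlock, not_frequently]

theorem stmt8_general (π : ℕ → ℕ) (hπ : StrictMono π) (z v t : Set ℕ)
    (hzv : ASub z v) (hvt : ASub v t)
    (μt μv : Measure (ℕ → Set ℕ)) [IsProbabilityMeasure μt] [IsProbabilityMeasure μv]
    (hprodt : ∀ (m : ℕ) (U : ℕ → Set (Set ℕ)),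
      μt {x | ∀ k < m, x k ∈ U k} = ∏ k ∈ Finset.range m, nuFun t π k (U k))
    (hprodv : ∀ (m : ℕ) (U : ℕ → Set (Set ℕ)),
      μv {x | ∀ k < m, x k ∈ U k} = ∏ k ∈ Finset.range m, nuFun v π k (U k)) :
    μt (pinfSet π z) ≤ μv (pinfSet π z) := by
  obtain ⟨N, hN⟩ := eventually_atTop.1 <|
    (hzv.eventually_inter_Iblk_subset hπ).and (hvt.eventually_inter_Iblk_subset hπ)
  refine prob_le_of_prob_compl_le (measurableSet_pinfSet π z) ?_
  rw [compl_pinfSet]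
  refine measure_setOf_eventually_mem_le (fun _ ↦ MeasurableSpace.measurableSet_top) ?_
  filter_upwards [eventually_ge_atTop N] with m hm M
  let U k : Set (Set ℕ) := {s | m ≤ k → s ∈ (subsetOnBlock π z k)ᶜ}
  calc μv {x | ∀ k < M, m ≤ k → x k ∈ (subsetOnBlock π z k)ᶜ}
      = ∏ k ∈ Finset.range M, nuFun v π k (U k) := hprodv M U
    _ ≤ ∏ k ∈ Finset.range M, nuFun t π k (U k) := Finset.prod_le_prod' fun k _ ↦ ?_
    _ = μt {x | ∀ k < M, m ≤ k → x k ∈ (subsetOnBlock π z k)ᶜ} := (hprodt M U).symm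
  by_cases hk : m ≤ k
  · obtain ⟨hzv', hvt'⟩ := hN k (hm.trans hk)
    simp only [U, hk, forall_const, ofPred_mem_eq]
    exact nuFun_compl_subsetOnBlock_mono hzv' hvt'
  · simp [U, hk, nuFun_univ]

/-- If `z ⊆* v ⊆* t` then `μ_t(pinf z) ≤ μ_v(pinf z)`, where `μ_t`, `μ_v` are the
partition product measures associated to `t` and `v`. -/
theorem stmt8 (π : ℕ → ℕ) (hπ0 : π 0 = 0) (hπ : StrictMono π) (z v t : Set ℕ)
    (hzv : ASub z v) (hvt : ASub v t)
    (μt μv : Measure (ℕ → Set ℕ)) [IsProbabilityMeasure μt] [IsProbabilityMeasure μv]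
    (hprodt : ∀ (m : ℕ) (U : ℕ → Set (Set ℕ)),
      μt {x | ∀ k < m, x k ∈ U k} = ∏ k ∈ Finset.range m, nuFun t π k (U k))
    (hprodv : ∀ (m : ℕ) (U : ℕ → Set (Set ℕ)),
      μv {x | ∀ k < m, x k ∈ U k} = ∏ k ∈ Finset.range m, nuFun v π k (U k)) :
    μt (pinfSet π z) ≤ μv (pinfSet π z) :=
  stmt8_general π hπ z v t hzv hvt μt μv hprodt hprodv
end

section
/- Let t, u ⊆ ℕ with t ⊆* u, and let μ_t be the partition product measure associated to t over a partition function π. Then the set 𝒫*(u) = { y ⊆ ℕ : y ⊆* u } has μ_t-measure 1. -/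
open Set MeasureTheory Filter
open scoped ENNReal

/-!
Under `μ_t` the `n`-th coordinate is almost surely a subset of `t ∩ I_π(n)`: every finite cylinder
`{x | ∀ k < m, x k ⊆ t ∩ I_π(k)}` is a product of full factors, hence has measure 1, and countably
many such events intersect to a full event. So almost surely `⋃ₙ (x n ∩ I_π(n)) ⊆ t ⊆* u`.
-/

lemma nuFun_powerset_inter (a : Set ℕ) (π : ℕ → ℕ) (n : ℕ) :
    nuFun a π n (𝒫 (a ∩ Iblk π n)) = 1 := by
  have hfin : (a ∩ Iblk π n).Finite := (finite_Ico _ _).inter_of_right _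
  have hsub : {s : Set ℕ | s ⊆ a ∩ Iblk π n ∧ s ∈ 𝒫 (a ∩ Iblk π n)} = 𝒫 (a ∩ Iblk π n) := by
    ext s; simp [mem_powerset_iff]
  rw [nuFun, hsub, ncard_powerset _ hfin, Nat.cast_pow, Nat.cast_ofNat]
  exact ENNReal.div_self (by positivity) (ENNReal.pow_ne_top ENNReal.ofNat_ne_top)

lemma measure_univ_pi_eq_one {α : Type*} [MeasurableSpace α] {μ : Measure (ℕ → α)}
    [IsProbabilityMeasure μ] {U : ℕ → Set α} (hU : ∀ n, MeasurableSet (U n))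
    (h : ∀ m, μ {x | ∀ k < m, x k ∈ U k} = 1) :
    μ (univ.pi U) = 1 := by
  rw [← mem_ae_iff_prob_eq_one (MeasurableSet.univ_pi hU)]
  have hcoord (n : ℕ) : ∀ᵐ x ∂μ, x n ∈ U n := by
    have hcyl : ∀ᵐ x ∂μ, x ∈ (Iio (n + 1)).pi U :=
      (mem_ae_iff_prob_eq_one (MeasurableSet.pi (to_countable _) fun k _ => hU k)).2 (h (n + 1))
    filter_upwards [hcyl] with x hx using hx n n.lt_succ_self
  filter_upwards [ae_all_iff.2 hcoord] with x hx using mem_univ_pi.2 hx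

theorem stmt9_general (π : ℕ → ℕ) (t u : Set ℕ)
    (htu : ASub t u)
    (μt : Measure (ℕ → Set ℕ)) [IsProbabilityMeasure μt]
    (hprodt : ∀ (m : ℕ) (U : ℕ → Set (Set ℕ)),
      μt {x | ∀ k < m, x k ∈ U k} = ∏ k ∈ Finset.range m, nuFun t π k (U k)) :
    μt {x | ASub (⋃ n, x n ∩ Iblk π n) u} = 1 := by
  have hfull : μt (univ.pi fun n => 𝒫 (t ∩ Iblk π n)) = 1 :=
    measure_univ_pi_eq_one (fun _ => MeasurableSpace.measurableSet_top) fun m => by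
      rw [hprodt]
      exact Finset.prod_eq_one fun k _ => nuFun_powerset_inter t π k
  refine le_antisymm prob_le_one (hfull ▸ measure_mono fun x hx => htu.subset ?_)
  refine sdiff_subset_sdiff_left (iUnion_subset fun n => inter_subset_left.trans ?_)
  exact (mem_univ_pi.1 hx n).trans inter_subset_left

/-- If `t ⊆* u` then `𝒫*(u) = {y : y ⊆* u}` has `μ_t`-measure 1, where `μ_t` is
the partition product measure associated to `t`, the space `∏ₙ 𝒫(I_π(n))` being
identified with `𝒫(ℕ)` via `x ↦ ⋃ₙ (x n ∩ I_π(n))`. -/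
theorem stmt9 (π : ℕ → ℕ) (hπ0 : π 0 = 0) (hπ : StrictMono π) (t u : Set ℕ)
    (htu : ASub t u)
    (μt : Measure (ℕ → Set ℕ)) [IsProbabilityMeasure μt]
    (hprodt : ∀ (m : ℕ) (U : ℕ → Set (Set ℕ)),
      μt {x | ∀ k < m, x k ∈ U k} = ∏ k ∈ Finset.range m, nuFun t π k (U k)) :
    μt {x | ASub (⋃ n, x n ∩ Iblk π n) u} = 1 :=
  stmt9_general π t u htu μt hprodt
end
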